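/- arXiv:1801.07642 — 2 statements merged into one kernel-verified Lean document; each statement's English description precedes it below -/
import Mathlib

section
/- The function f(u) = (exp_φ(u) - 1)/u (extended by f(0) = 1/2) is monotonically increasing on ℝ and satisfies 0 < f(u) < 1 for all u, with limits f(u) → 0 as u → -∞ and f(u) → 1 as u → +∞. -/
/-!
Write `v = exp_φ u`, so that `u = v - 1 + log v`. For `u ≠ 0` this gives
`1 / f u = 1 + log v / (v - 1)`, and at `u = 0` both sides equal `2` once the difference
quotient `log v / (v - 1)` is extended by `log' 1 = 1`. That extended quotient,
`dslope log 1 v`, is the slope of the concave function `log` from the point `1`, hence positive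
and antitone in `v`, and it tends to `0` as `v → ∞`. Since `exp_φ` is increasing and unbounded,
`f` is increasing with values in `(0, 1)` and tends to `1` at `+∞`; at `-∞` the bound
`0 < f u ≤ 1 / |u|` suffices.
-/

open Real Set Filter Topology Function

lemma ConcaveOn.antitoneOn_dslope {S : Set ℝ} {f : ℝ → ℝ} {a : ℝ}
    (hfc : ConcaveOn ℝ S f) (ha : a ∈ S) (hfd : DifferentiableAt ℝ f a) :
    AntitoneOn (dslope f a) S := by
  intro x hx y hy hxy
  rcases eq_or_ne a x with rfl | hxa <;> rcases eq_or_ne a y with rfl | hya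
  · exact le_rfl
  · rw [dslope_same, dslope_of_ne f hya.symm]
    exact hfc.slope_le_deriv ha hy (lt_of_le_of_ne hxy hya) hfd
  · rw [dslope_same, dslope_of_ne f hxa.symm, slope_comm]
    exact hfc.deriv_le_slope hx ha (lt_of_le_of_ne hxy hxa.symm) hfd
  · rw [dslope_of_ne f hxa.symm, dslope_of_ne f hya.symm]
    exact hfc.slope_anti ha ⟨hx, hxa.symm⟩ ⟨hy, hya.symm⟩ hxy

lemma dslope_log_one_of_ne {v : ℝ} (hv : v ≠ 1) : dslope log 1 v = log v / (v - 1) := by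
  rw [dslope_of_ne _ hv, slope_def_field, log_one, sub_zero]

lemma dslope_log_one_self : dslope log 1 1 = 1 := by
  rw [dslope_same, deriv_log, inv_one]

lemma dslope_log_one_pos {v : ℝ} (hv : 0 < v) : 0 < dslope log 1 v := by
  rcases lt_trichotomy v 1 with hv1 | rfl | hv1
  · rw [dslope_log_one_of_ne hv1.ne]
    exact div_pos_of_neg_of_neg (log_neg hv hv1) (sub_neg.2 hv1)
  · rw [dslope_log_one_self]
    exact one_pos
  · rw [dslope_log_one_of_ne hv1.ne']
    exact div_pos (log_pos hv1) (sub_pos.2 hv1)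

lemma antitoneOn_dslope_log_one : AntitoneOn (dslope log 1) (Ioi 0) :=
  strictConcaveOn_log_Ioi.concaveOn.antitoneOn_dslope (mem_Ioi.2 one_pos)
    (differentiableAt_log one_ne_zero)

lemma tendsto_dslope_log_one_atTop : Tendsto (dslope log 1) atTop (𝓝 0) := by
  refine (tendsto_pow_log_div_mul_add_atTop 1 (-1) 1 one_ne_zero).congr' ?_
  filter_upwards [eventually_gt_atTop 1] with v hv
  rw [dslope_log_one_of_ne hv.ne', pow_one, one_mul, ← sub_eq_add_neg]

noncomputable def logφ (v : ℝ) : ℝ := v - 1 + log v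

lemma strictMonoOn_logφ : StrictMonoOn logφ (Ioi 0) := fun x hx y hy hxy ↦ by
  have := strictMonoOn_log hx hy hxy
  unfold logφ
  linarith

section RightInverse

variable {E : ℝ → ℝ}

lemma monotone_of_leftInverse_logφ (hpos : ∀ u, 0 < E u) (hinv : LeftInverse logφ E) :
    Monotone E := fun a b hab ↦
  (strictMonoOn_logφ.le_iff_le (hpos a) (hpos b)).1 (by rwa [hinv, hinv])

lemma eq_one_iff_of_leftInverse_logφ (hpos : ∀ u, 0 < E u) (hinv : LeftInverse logφ E)
    {u : ℝ} : E u = 1 ↔ u = 0 := by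
  have hlogφ_one : logφ 1 = 0 := by simp [logφ]
  constructor
  · intro h
    rw [← hinv u, h, hlogφ_one]
  · rintro rfl
    exact strictMonoOn_logφ.injOn (hpos 0) (mem_Ioi.2 one_pos) (by rw [hinv, hlogφ_one])

lemma tendsto_atTop_of_leftInverse_logφ (hpos : ∀ u, 0 < E u) (hinv : LeftInverse logφ E) :
    Tendsto E atTop atTop := by
  refine tendsto_atTop_mono (fun u ↦ ?_) (tendsto_id.atTop_div_const two_pos)
  have hlogφ : E u - 1 + log (E u) = u := hinv u
  have := log_le_sub_one_of_pos (hpos u)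
  change u / 2 ≤ E u
  linarith

lemma eq_inv_one_add_dslope_log_of_leftInverse_logφ (hpos : ∀ u, 0 < E u)
    (hinv : LeftInverse logφ E) {f : ℝ → ℝ} (hf : ∀ u, u ≠ 0 → f u = (E u - 1) / u)
    (hf0 : f 0 = 1 / 2) : f = fun u ↦ (1 + dslope log 1 (E u))⁻¹ := by
  funext u
  by_cases hu : u = 0
  · subst hu
    rw [hf0, (eq_one_iff_of_leftInverse_logφ hpos hinv).2 rfl, dslope_log_one_self]
    norm_num
  · have hE : E u ≠ 1 := mt (eq_one_iff_of_leftInverse_logφ hpos hinv).1 hu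
    rw [hf u hu, dslope_log_one_of_ne hE, one_add_div (sub_ne_zero.2 hE)]
    rw [show E u - 1 + log (E u) = u from hinv u, inv_div]

end RightInverse

lemma sub_one_div_le_inv_neg {v u : ℝ} (hv : 0 < v) (hu : u < 0) : (v - 1) / u ≤ (-u)⁻¹ := by
  rw [← neg_div_neg_eq, neg_sub, inv_eq_one_div]
  exact div_le_div_of_nonneg_right (by linarith) (by linarith)

theorem diff_quotient_monotone (expφ : ℝ → ℝ) (hpos : ∀ u, 0 < expφ u)
    (hinv : ∀ u, expφ u - 1 + Real.log (expφ u) = u)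
    (f : ℝ → ℝ) (hf : ∀ u : ℝ, u ≠ 0 → f u = (expφ u - 1) / u) (hf0 : f 0 = 1 / 2) :
    Monotone f ∧ (∀ u : ℝ, 0 < f u ∧ f u < 1) ∧
    Filter.Tendsto f Filter.atBot (nhds 0) ∧
    Filter.Tendsto f Filter.atTop (nhds 1) := by
  have hrep := eq_inv_one_add_dslope_log_of_leftInverse_logφ hpos hinv hf hf0
  have hslope_pos : ∀ u, 0 < dslope log 1 (expφ u) := fun u ↦ dslope_log_one_pos (hpos u)
  have hbounds : ∀ u, 0 < f u ∧ f u < 1 := fun u ↦ by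
    rw [hrep]
    exact ⟨inv_pos.2 (by linarith [hslope_pos u]),
      inv_lt_one_of_one_lt₀ (lt_add_of_pos_right 1 (hslope_pos u))⟩
  refine ⟨fun a b hab ↦ ?_, hbounds, ?_, ?_⟩
  · have hslope_anti := antitoneOn_dslope_log_one (hpos a) (hpos b)
      (monotone_of_leftInverse_logφ hpos hinv hab)
    rw [hrep]
    exact inv_anti₀ (by linarith [hslope_pos b]) (add_le_add_right hslope_anti 1)
  · refine tendsto_of_tendsto_of_tendsto_of_le_of_le' tendsto_const_nhds
      (tendsto_inv_atTop_zero.comp tendsto_neg_atBot_atTop)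
      (.of_forall fun u ↦ (hbounds u).1.le) ?_
    filter_upwards [eventually_lt_atBot 0] with u hu
    rw [hf u hu.ne]
    exact sub_one_div_le_inv_neg (hpos u) hu
  · have hlim := ((tendsto_dslope_log_one_atTop.comp
      (tendsto_atTop_of_leftInverse_logφ hpos hinv)).const_add 1).inv₀ (by norm_num)
    rw [hrep]
    simpa using hlim
end

section
/- The function f(u) = (exp_φ(u) - 1)/u (with f(0) = 1/2) is 1/2-Lipschitz: |f(u) - f(v)| ≤ (1/2)|u - v| for all real u, v. -/
/-!
Put `x = exp_φ u > 0`, so that `u = logφ x = x - 1 + log x` and `f u = F x := (x - 1) / logφ x`,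
with `F 1 = 1 / 2`. Since `exp_φ` is increasing, it suffices that `F` and `logφ / 2 - F` are both
monotone on `(0, ∞)`. Away from `x = 1`, `F' x = (log x - 1 + 1 / x) / logφ x ^ 2 ≥ 0` because
`log x ≥ 1 - 1 / x`, and `logφ' / 2 - F' ≥ 0` follows from `log x ≤ x - 1` together with
`2 (x - 1)² ≤ (x + 1) logφ(x)²`. Continuity of `F` at `1` glues the two half-lines.
-/

open Real Set

noncomputable def logPhi (x : ℝ) : ℝ := x - 1 + log x

lemma logPhi_one : logPhi 1 = 0 := by simp [logPhi]

lemma strictMonoOn_logPhi : StrictMonoOn logPhi (Ioi 0) := fun x hx y _ hxy => by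
  have := log_lt_log hx hxy
  simp only [logPhi]; linarith

lemma hasDerivAt_logPhi {x : ℝ} (hx : x ≠ 0) : HasDerivAt logPhi (1 + x⁻¹) x :=
  ((hasDerivAt_id x).sub_const 1).add (hasDerivAt_log hx)

lemma logPhi_ne_zero {x : ℝ} (hx : 0 < x) (hx1 : x ≠ 1) : logPhi x ≠ 0 :=
  logPhi_one ▸ strictMonoOn_logPhi.injOn.ne hx (mem_Ioi.2 one_pos) hx1

/-- `dslope log 1 x` is `log x / (x - 1)` for `x ≠ 1` and `log' 1 = 1` at `x = 1`, so this is
`(x - 1) / logPhi x` extended continuously by `1 / 2` at `x = 1`. -/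
noncomputable def divLogPhi (x : ℝ) : ℝ := (1 + dslope log 1 x)⁻¹

lemma divLogPhi_one : divLogPhi 1 = 1 / 2 := by
  norm_num [divLogPhi, dslope_same]

lemma divLogPhi_of_ne {x : ℝ} (hx : x ≠ 1) : divLogPhi x = (x - 1) / logPhi x := by
  rw [divLogPhi, dslope_of_ne _ hx, slope_def_field, log_one, sub_zero,
    one_add_div (sub_ne_zero.2 hx), inv_div, logPhi]

lemma dslope_log_one_nonneg {x : ℝ} (hx : 0 < x) : 0 ≤ dslope log 1 x := by
  rcases eq_or_ne x 1 with rfl | hx1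
  · simp [dslope_same]
  · rw [dslope_of_ne _ hx1]
    exact strictMonoOn_log.monotoneOn.slope_nonneg (mem_Ioi.2 one_pos) hx

lemma continuousOn_divLogPhi : ContinuousOn divLogPhi (Ioi 0) := by
  have hslope : ContinuousOn (dslope log 1) (Ioi 0) :=
    (continuousOn_dslope (Ioi_mem_nhds one_pos)).2
      ⟨continuousOn_log.mono fun x hx => (ne_of_gt hx), differentiableAt_log one_ne_zero⟩
  refine (continuousOn_const.add hslope).inv₀ fun x hx => ?_
  exact (add_pos_of_pos_of_nonneg one_pos (dslope_log_one_nonneg hx)).ne'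

lemma hasDerivAt_divLogPhi {x : ℝ} (hx : 0 < x) (hx1 : x ≠ 1) :
    HasDerivAt divLogPhi ((log x - 1 + x⁻¹) / logPhi x ^ 2) x := by
  have h : HasDerivAt (fun y => (y - 1) / logPhi y)
      ((1 * logPhi x - (x - 1) * (1 + x⁻¹)) / logPhi x ^ 2) x :=
    ((hasDerivAt_id' x).sub_const 1).div (hasDerivAt_logPhi hx.ne') (logPhi_ne_zero hx hx1)
  refine (h.congr_of_eventuallyEq ?_).congr_deriv ?_
  · filter_upwards [isOpen_ne.mem_nhds hx1] with y hy using divLogPhi_of_ne hy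
  · rw [logPhi]; field_simp; ring

lemma two_mul_sq_sub_one_le {x : ℝ} (hx : 0 < x) : 2 * (x - 1) ^ 2 ≤ (x + 1) * logPhi x ^ 2 := by
  have := log_le_sub_one_of_pos hx
  rcases le_total x 1 with h | h
  · have : logPhi x ≤ 2 * (x - 1) := by simp only [logPhi]; linarith
    nlinarith
  · have : x - 1 ≤ logPhi x := by simp only [logPhi]; linarith [log_nonneg h]
    nlinarith

lemma monotoneOn_Ioi_of_hasDerivAt_nonneg_of_ne {g g' : ℝ → ℝ} {a c : ℝ} (hac : a < c)
    (hg : ContinuousOn g (Ioi a)) (hg' : ∀ x ∈ Ioi a, x ≠ c → HasDerivAt g (g' x) x)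
    (hg'_nonneg : ∀ x ∈ Ioi a, x ≠ c → 0 ≤ g' x) : MonotoneOn g (Ioi a) := by
  have left : MonotoneOn g (Ioc a c) := by
    refine monotoneOn_of_hasDerivWithinAt_nonneg (f' := g') (convex_Ioc a c)
      (hg.mono Ioc_subset_Ioi_self) (fun x hx => ?_) (fun x hx => ?_) <;>
      rw [interior_Ioc] at hx
    · exact (hg' x hx.1 hx.2.ne).hasDerivWithinAt
    · exact hg'_nonneg x hx.1 hx.2.ne
  have right : MonotoneOn g (Ici c) := by
    refine monotoneOn_of_hasDerivWithinAt_nonneg (f' := g') (convex_Ici c)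
      (hg.mono (Ici_subset_Ioi.2 hac)) (fun x hx => ?_) (fun x hx => ?_) <;>
      rw [interior_Ici] at hx
    · exact (hg' x (hac.trans hx) hx.ne').hasDerivWithinAt
    · exact hg'_nonneg x (hac.trans hx) hx.ne'
  rw [← Ioc_union_Ici_eq_Ioi hac]
  exact left.union_right right (isGreatest_Ioc hac) isLeast_Ici

lemma monotoneOn_divLogPhi : MonotoneOn divLogPhi (Ioi 0) :=
  monotoneOn_Ioi_of_hasDerivAt_nonneg_of_ne one_pos continuousOn_divLogPhi
    (fun _ hx hx1 => hasDerivAt_divLogPhi hx hx1) fun x hx _ => by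
      have := one_sub_inv_le_log_of_pos hx
      exact div_nonneg (by linarith) (sq_nonneg _)

lemma monotoneOn_half_logPhi_sub_divLogPhi :
    MonotoneOn (fun x => logPhi x / 2 - divLogPhi x) (Ioi 0) := by
  refine monotoneOn_Ioi_of_hasDerivAt_nonneg_of_ne one_pos ?_
    (fun x hx hx1 => ((hasDerivAt_logPhi (ne_of_gt hx)).div_const 2).sub
      (hasDerivAt_divLogPhi hx hx1)) fun x hx hx1 => ?_
  · exact (ContinuousOn.div_const (fun x hx => (hasDerivAt_logPhi (ne_of_gt hx)).continuousAt
      |>.continuousWithinAt) 2).sub continuousOn_divLogPhi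
  · have hx0 : 0 < x := hx
    have hB : 0 < logPhi x ^ 2 := sq_pos_of_ne_zero (logPhi_ne_zero hx0 hx1)
    rw [sub_nonneg, div_le_iff₀ hB]
    calc log x - 1 + x⁻¹ ≤ x - 2 + x⁻¹ := by linarith [log_le_sub_one_of_pos hx0]
      _ = (x - 1) ^ 2 / x := by field_simp; ring
      _ ≤ (x + 1) * logPhi x ^ 2 / 2 / x := by
          gcongr; linarith [two_mul_sq_sub_one_le hx0]
      _ = (1 + x⁻¹) / 2 * logPhi x ^ 2 := by field_simp

lemma abs_sub_le_mul_of_monotone {f : ℝ → ℝ} {c : ℝ} (hf : Monotone f)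
    (hcf : Monotone fun u => c * u - f u) (u v : ℝ) : |f u - f v| ≤ c * |u - v| := by
  wlog huv : u ≤ v generalizing u v
  · rw [abs_sub_comm, abs_sub_comm u]; exact this v u (le_of_not_ge huv)
  have h1 := hf huv
  have h2 := hcf huv
  rw [abs_sub_comm, abs_of_nonneg (sub_nonneg.2 h1), abs_sub_comm, abs_of_nonneg (sub_nonneg.2 huv)]
  dsimp only at h2
  linarith

theorem diff_quotient_lipschitz (expφ : ℝ → ℝ) (hpos : ∀ u, 0 < expφ u)
    (hinv : ∀ u, expφ u - 1 + Real.log (expφ u) = u)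
    (f : ℝ → ℝ) (hf : ∀ u : ℝ, u ≠ 0 → f u = (expφ u - 1) / u) (hf0 : f 0 = 1 / 2) :
    ∀ u v : ℝ, |f u - f v| ≤ (1 / 2) * |u - v| := by
  have hlog : ∀ u, logPhi (expφ u) = u := hinv
  have hmono : Monotone expφ := fun u v huv =>
    (strictMonoOn_logPhi.le_iff_le (hpos u) (hpos v)).1 (by rwa [hlog, hlog])
  have hf_eq : ∀ u, f u = divLogPhi (expφ u) := by
    intro u
    rcases eq_or_ne u 0 with rfl | hu
    · have : expφ 0 = 1 := strictMonoOn_logPhi.injOn (hpos 0) (mem_Ioi.2 one_pos)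
        (by rw [hlog, logPhi_one])
      rw [hf0, this, divLogPhi_one]
    · have : expφ u ≠ 1 := fun h => hu (by rw [← hlog u, h, logPhi_one])
      rw [hf u hu, divLogPhi_of_ne this, hlog]
  refine abs_sub_le_mul_of_monotone (fun u v huv => ?_) (fun u v huv => ?_)
  · rw [hf_eq, hf_eq]
    exact monotoneOn_divLogPhi (hpos u) (hpos v) (hmono huv)
  · have := monotoneOn_half_logPhi_sub_divLogPhi (hpos u) (hpos v) (hmono huv)
    simp only [hlog, ← hf_eq] at this
    linarith
end
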